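/- arXiv:2403.04694 — 7 statements merged into one kernel-verified Lean document; each statement's English description precedes it below -/
import Mathlib

section
/- For every finite proper interval graph G, the domination number equals the [1,2]-domination number: γ(G) = γ_{[1,2]}(G). -/
/-- `(l, r)` is an interval representation of `G` by closed real intervals:
each vertex `v` gets the nonempty closed interval `[l v, r v]`, and distinct
vertices are adjacent iff their intervals intersect. -/
def IsIntervalRep {V : Type*} (G : SimpleGraph V) (l r : V → ℝ) : Prop :=
  (∀ v : V, l v ≤ r v) ∧
  ∀ u v : V, u ≠ v → (G.Adj u v ↔ (Set.Icc (l u) (r u) ∩ Set.Icc (l v) (r v)).Nonempty)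

/-- The representation is proper: no interval is properly contained in another. -/
def IsProperRep {V : Type*} (l r : V → ℝ) : Prop :=
  ∀ u v : V, ¬ Set.Icc (l u) (r u) ⊂ Set.Icc (l v) (r v)

/-- `D` is a dominating set of `G`. -/
def IsDomSet {V : Type*} [Fintype V] [DecidableEq V] (G : SimpleGraph V)
    [DecidableRel G.Adj] (D : Finset V) : Prop :=
  ∀ v : V, v ∉ D → ∃ u ∈ D, G.Adj v u

/-- `D` is a `[1,2]`-dominating set of `G`: every vertex outside `D` has at least
one and at most two neighbors in `D`. -/
def IsDom12Set {V : Type*} [Fintype V] [DecidableEq V] (G : SimpleGraph V)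
    [DecidableRel G.Adj] (D : Finset V) : Prop :=
  ∀ v : V, v ∉ D →
    1 ≤ (D.filter (fun u => G.Adj v u)).card ∧ (D.filter (fun u => G.Adj v u)).card ≤ 2

/-- The domination number `γ(G)`. -/
noncomputable def domNum {V : Type*} [Fintype V] [DecidableEq V] (G : SimpleGraph V)
    [DecidableRel G.Adj] : ℕ :=
  sInf {k : ℕ | ∃ D : Finset V, IsDomSet G D ∧ D.card = k}

/-- The `[1,2]`-domination number `γ_{[1,2]}(G)`. -/
noncomputable def dom12Num {V : Type*} [Fintype V] [DecidableEq V] (G : SimpleGraph V)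
    [DecidableRel G.Adj] : ℕ :=
  sInf {k : ℕ | ∃ D : Finset V, IsDom12Set G D ∧ D.card = k}

/-- `G` is claw-free: no vertex has three pairwise nonadjacent neighbors. -/
def ClawFree {V : Type*} (G : SimpleGraph V) : Prop :=
  ¬ ∃ (v a b c : V), G.Adj v a ∧ G.Adj v b ∧ G.Adj v c ∧
      a ≠ b ∧ a ≠ c ∧ b ≠ c ∧ ¬ G.Adj a b ∧ ¬ G.Adj a c ∧ ¬ G.Adj b c

/-!
Take a minimum dominating set `D` of least total left endpoint, and suppose some `v ∉ D` meets
three members `a`, `b`, `c` of `D` with `l a ≤ l b ≤ l c`. Since no interval contains another,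
`l` and `r` are comonotone. If `l v < l b`, every interval meeting `b` meets `a`, `v` or `c`, so
`v` may replace `b`. Otherwise `a` meets `b`; by minimality `a` has a private neighbour `z`,
which must lie left of `a`, and `z` may replace `a`. Either exchange lowers the total left
endpoint, so every vertex outside `D` has at most two neighbours in `D`.
-/

open Finset

section Domination

variable {V : Type*} [Fintype V] [DecidableEq V] {G : SimpleGraph V} [DecidableRel G.Adj]

theorem IsDom12Set.isDomSet {D : Finset V} (hD : IsDom12Set G D) : IsDomSet G D := by
  intro v hv
  obtain ⟨u, hu⟩ := card_pos.mp (hD v hv).1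
  exact ⟨u, (mem_filter.mp hu).1, (mem_filter.mp hu).2⟩

theorem domNum_le_card {D : Finset V} (hD : IsDomSet G D) : domNum G ≤ #D :=
  Nat.sInf_le ⟨D, hD, rfl⟩

theorem dom12Num_le_card {D : Finset V} (hD : IsDom12Set G D) : dom12Num G ≤ #D :=
  Nat.sInf_le ⟨D, hD, rfl⟩

theorem exists_isDomSet_card_eq_domNum : ∃ D, IsDomSet G D ∧ #D = domNum G :=
  Nat.sInf_mem (s := {k | ∃ D : Finset V, IsDomSet G D ∧ #D = k})
    ⟨_, univ, fun v hv => absurd (mem_univ v) hv, rfl⟩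

theorem exists_isDom12Set_card_eq_dom12Num : ∃ D, IsDom12Set G D ∧ #D = dom12Num G :=
  Nat.sInf_mem (s := {k | ∃ D : Finset V, IsDom12Set G D ∧ #D = k})
    ⟨_, univ, fun v hv => absurd (mem_univ v) hv, rfl⟩

theorem domNum_le_dom12Num : domNum G ≤ dom12Num G := by
  obtain ⟨D, hD, hcard⟩ := exists_isDom12Set_card_eq_dom12Num (G := G)
  exact hcard ▸ domNum_le_card hD.isDomSet

theorem exists_isDomSet_card_eq_domNum_sum_le (f : V → ℝ) :
    ∃ D, IsDomSet G D ∧ #D = domNum G ∧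
      ∀ E, IsDomSet G E → #E = domNum G → ∑ u ∈ D, f u ≤ ∑ u ∈ E, f u := by
  classical
  have hne : ({E | IsDomSet G E ∧ #E = domNum G} : Finset (Finset V)).Nonempty := by
    obtain ⟨D, hD⟩ := exists_isDomSet_card_eq_domNum (G := G)
    exact ⟨D, by simpa using hD⟩
  obtain ⟨D, hD, hmin⟩ := exists_min_image _ (fun E => ∑ u ∈ E, f u) hne
  simp only [mem_filter, mem_univ, true_and] at hD hmin
  exact ⟨D, hD.1, hD.2, fun E hE hcard => hmin E ⟨hE, hcard⟩⟩

end Domination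

theorem Finset.exists_le_le_of_two_lt_card {α β : Type*} [DecidableEq α] [LinearOrder β]
    {s : Finset α} (f : α → β) (hs : 2 < #s) :
    ∃ a ∈ s, ∃ b ∈ s, ∃ c ∈ s, a ≠ b ∧ b ≠ c ∧ f a ≤ f b ∧ f b ≤ f c := by
  obtain ⟨a, ha, hamin⟩ := s.exists_min_image f (card_pos.mp (by omega))
  have hsa : 1 < #(s.erase a) := by rw [card_erase_of_mem ha]; omega
  obtain ⟨c, hc, hcmax⟩ := (s.erase a).exists_max_image f (card_pos.mp (by omega))
  obtain ⟨b, hb⟩ := card_pos.mp (by rw [card_erase_of_mem hc]; omega : 0 < #((s.erase a).erase c))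
  have hb' := mem_of_mem_erase hb
  exact ⟨a, ha, b, mem_of_mem_erase hb', c, mem_of_mem_erase hc, (ne_of_mem_erase hb').symm,
    ne_of_mem_erase hb, hamin b (mem_of_mem_erase hb'), hcmax b hb'⟩

theorem Finset.card_insert_erase_eq_and_sum_lt {α : Type*} [DecidableEq α] {s : Finset α}
    {x y : α} (f : α → ℝ) (hx : x ∈ s) (hy : y ∉ s.erase x) (hlt : f y < f x) :
    #(insert y (s.erase x)) = #s ∧ ∑ u ∈ insert y (s.erase x), f u < ∑ u ∈ s, f u := by
  refine ⟨?_, ?_⟩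
  · rw [card_insert_of_notMem hy, card_erase_add_one hx]
  · rw [sum_insert hy, ← add_sum_erase s f hx]
    linarith

section Intervals

variable {V : Type*}

def IntervalsMeet (l r : V → ℝ) (u w : V) : Prop :=
  l u ≤ r w ∧ l w ≤ r u

noncomputable instance (l r : V → ℝ) : DecidableRel (IntervalsMeet l r) :=
  fun _ _ => inferInstanceAs (Decidable (_ ∧ _))

def IsIntervalCover (l r : V → ℝ) (D : Finset V) : Prop :=
  ∀ w, ∃ u ∈ D, IntervalsMeet l r w u

variable {l r : V → ℝ}

theorem IsProperRep.right_le_right (hp : IsProperRep l r) {x y : V} (hx : l x ≤ r x)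
    (h : l x ≤ l y) : r x ≤ r y := by
  by_contra! hlt
  refine hp y x (ssubset_iff_subset_ne.mpr ⟨Set.Icc_subset_Icc h hlt.le, fun heq => ?_⟩)
  have : r x ∈ Set.Icc (l y) (r y) := heq ▸ Set.right_mem_Icc.mpr hx
  exact absurd this.2 (not_le.mpr hlt)

theorem IsIntervalRep.adj_iff {G : SimpleGraph V} (hrep : IsIntervalRep G l r) {u w : V}
    (huw : u ≠ w) : G.Adj u w ↔ IntervalsMeet l r u w := by
  rw [hrep.2 u w huw, Set.Icc_inter_Icc, Set.nonempty_Icc, IntervalsMeet]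
  constructor
  · intro h
    exact ⟨(le_sup_left.trans h).trans inf_le_right, (le_sup_right.trans h).trans inf_le_left⟩
  · intro h
    exact sup_le (le_inf (hrep.1 u) h.1) (le_inf h.2 (hrep.1 w))

theorem IsIntervalRep.isDomSet_iff [Fintype V] [DecidableEq V] {G : SimpleGraph V}
    [DecidableRel G.Adj] (hrep : IsIntervalRep G l r) {D : Finset V} :
    IsDomSet G D ↔ IsIntervalCover l r D := by
  constructor
  · intro hD w
    by_cases hw : w ∈ D
    · exact ⟨w, hw, hrep.1 w, hrep.1 w⟩
    · obtain ⟨u, hu, hwu⟩ := hD w hw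
      exact ⟨u, hu, (hrep.adj_iff (ne_of_mem_of_not_mem hu hw).symm).mp hwu⟩
  · intro hD w hw
    obtain ⟨u, hu, hwu⟩ := hD w
    exact ⟨u, hu, (hrep.adj_iff (ne_of_mem_of_not_mem hu hw).symm).mpr hwu⟩

variable [DecidableEq V] (hlr : ∀ v, l v ≤ r v) (hmono : ∀ x y, l x ≤ l y → r x ≤ r y)
include hlr hmono

/-- Every interval meeting `b` also meets `a`, `v` or `c`. -/
theorem IsIntervalCover.insert_erase_of_between {D : Finset V} (hD : IsIntervalCover l r D)
    {v a b c : V} (ha : a ∈ D.erase b) (hc : c ∈ D.erase b) (hva : IntervalsMeet l r v a)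
    (hvc : IntervalsMeet l r v c) (hab : l a ≤ l b) (hbc : l b ≤ l c) :
    IsIntervalCover l r (insert v (D.erase b)) := by
  intro w
  obtain ⟨u, hu, hwu⟩ := hD w
  by_cases hub : u = b
  · subst hub
    obtain ⟨hwu₁, hwu₂⟩ := hwu
    rcases le_or_gt (l w) (l a) with hwa | haw
    · exact ⟨a, mem_insert_of_mem ha, hwa.trans (hlr a), hab.trans hwu₂⟩
    rcases le_or_gt (l c) (l w) with hcw | hwc
    · exact ⟨c, mem_insert_of_mem hc, hwu₁.trans (hmono u c hbc), hcw.trans (hlr w)⟩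
    · exact ⟨v, mem_insert_self _ _, hwc.le.trans hvc.2, hva.1.trans (hmono a w haw.le)⟩
  · exact ⟨u, mem_insert_of_mem (mem_erase.mpr ⟨hub, hu⟩), hwu⟩

/-- The intervals covered by `a` alone miss `b`, hence lie left of `a` and all meet each other. -/
theorem IsIntervalCover.exists_insert_erase_of_meets {D : Finset V} (hD : IsIntervalCover l r D)
    {a b : V} (hmin : ¬ IsIntervalCover l r (D.erase a)) (hb : b ∈ D.erase a)
    (hab : IntervalsMeet l r a b) (hlab : l a ≤ l b) :
    ∃ z ∉ D.erase a, l z < l a ∧ IsIntervalCover l r (insert z (D.erase a)) := by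
  have hprivate : ∀ w, (∀ u ∈ D.erase a, ¬ IntervalsMeet l r w u) →
      IntervalsMeet l r w a ∧ l w < l a := by
    intro w hw
    obtain ⟨u, hu, hwu⟩ := hD w
    obtain rfl : u = a := by_contra fun hua => hw u (mem_erase.mpr ⟨hua, hu⟩) hwu
    refine ⟨hwu, lt_of_not_ge fun haw => hw b hb ⟨hwu.1.trans (hmono u b hlab), ?_⟩⟩
    exact hab.2.trans (hmono u w haw)
  obtain ⟨z, hz⟩ : ∃ z, ∀ u ∈ D.erase a, ¬ IntervalsMeet l r z u := by
    simpa [IsIntervalCover] using hmin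
  obtain ⟨hza, hzl⟩ := hprivate z hz
  refine ⟨z, fun h => hz z h ⟨hlr z, hlr z⟩, hzl, fun w => ?_⟩
  by_cases hw : ∃ u ∈ D.erase a, IntervalsMeet l r w u
  · obtain ⟨u, hu, hwu⟩ := hw
    exact ⟨u, mem_insert_of_mem hu, hwu⟩
  · obtain ⟨hwa, hwl⟩ := hprivate w (by simpa using hw)
    exact ⟨z, mem_insert_self _ _, hwl.le.trans hza.2, hzl.le.trans hwa.2⟩

theorem IsIntervalCover.card_filter_le_two {D : Finset V} (hD : IsIntervalCover l r D)
    (hcard : ∀ E, IsIntervalCover l r E → #D ≤ #E)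
    (hsum : ∀ E, IsIntervalCover l r E → #E = #D → ∑ u ∈ D, l u ≤ ∑ u ∈ E, l u)
    {v : V} (hv : v ∉ D) : #{u ∈ D | IntervalsMeet l r v u} ≤ 2 := by
  by_contra! h3
  obtain ⟨a, ha, b, hb, c, hc, hab, hbc, hlab, hlbc⟩ := exists_le_le_of_two_lt_card l h3
  simp only [mem_filter] at ha hb hc
  have hnot_erase : ∀ x ∈ D, ¬ IsIntervalCover l r (D.erase x) := fun x hx hE => by
    have := hcard _ hE
    rw [card_erase_of_mem hx] at this
    have := card_pos.mpr ⟨x, hx⟩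
    omega
  have hswap : ∀ x ∈ D, ∀ y ∉ D.erase x, l y < l x →
      ¬ IsIntervalCover l r (insert y (D.erase x)) := fun x hx y hy hlt hE => by
    obtain ⟨hcardE, hsumE⟩ := card_insert_erase_eq_and_sum_lt l hx hy hlt
    exact (hsum _ hE hcardE).not_gt hsumE
  rcases lt_or_ge (l v) (l b) with hvb | hbv
  · refine hswap b hb.1 v (fun h => hv (mem_of_mem_erase h)) hvb ?_
    exact hD.insert_erase_of_between hlr hmono (mem_erase.mpr ⟨hab, ha.1⟩)
      (mem_erase.mpr ⟨hbc.symm, hc.1⟩) ha.2 hc.2 hlab hlbc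
  · have hmeet : IntervalsMeet l r a b := ⟨hlab.trans (hlr b), hbv.trans ha.2.1⟩
    obtain ⟨z, hz, hza, hE⟩ := hD.exists_insert_erase_of_meets hlr hmono
      (hnot_erase a ha.1) (mem_erase.mpr ⟨hab.symm, hb.1⟩) hmeet hlab
    exact hswap a ha.1 z hz hza hE

end Intervals

/-- For every finite proper interval graph `G`, the domination number equals the
`[1,2]`-domination number. -/
theorem domNum_eq_dom12Num_of_properIntervalGraph
    {V : Type*} [Fintype V] [DecidableEq V] (G : SimpleGraph V) [DecidableRel G.Adj]
    (l r : V → ℝ) (hrep : IsIntervalRep G l r) (hproper : IsProperRep l r) :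
    domNum G = dom12Num G := by
  have hmono : ∀ x y, l x ≤ l y → r x ≤ r y := fun x y => hproper.right_le_right (hrep.1 x)
  obtain ⟨D, hD, hDcard, hDsum⟩ := exists_isDomSet_card_eq_domNum_sum_le (G := G) l
  have hcover : IsIntervalCover l r D := hrep.isDomSet_iff.mp hD
  refine le_antisymm domNum_le_dom12Num (hDcard ▸ dom12Num_le_card fun v hv => ?_)
  have hfilter : {u ∈ D | G.Adj v u} = {u ∈ D | IntervalsMeet l r v u} :=
    filter_congr fun u hu => hrep.adj_iff (ne_of_mem_of_not_mem hu hv).symm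
  rw [hfilter]
  refine ⟨card_pos.mpr ?_, hcover.card_filter_le_two hrep.1 hmono ?_ ?_ hv⟩
  · obtain ⟨u, hu, hvu⟩ := hcover v
    exact ⟨u, mem_filter.mpr ⟨hu, hvu⟩⟩
  · exact fun E hE => hDcard ▸ domNum_le_card (hrep.isDomSet_iff.mpr hE)
  · exact fun E hE hcard => hDsum E (hrep.isDomSet_iff.mpr hE) (hcard.trans hDcard)
end

section
/- For each finite interval graph G = (V,E) of order n, there exists a bijective numbering σ : V → {1,2,…,n} of the vertices such that for all vertices u, v, w with σ(u) < σ(v) < σ(w), if u is adjacent to w then v is adjacent to w. -/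
/-!
Number the vertices by nondecreasing right endpoint. If `σ u < σ v < σ w` and the intervals
of `u` and `w` meet, then `l w ≤ r u ≤ r v ≤ r w`, so the right endpoint of `v` lies in the
interval of `w`.
-/

theorem exists_equiv_fin_monotone {V α : Type*} [Fintype V] [LinearOrder α] {n : ℕ}
    (hn : Fintype.card V = n) (f : V → α) :
    ∃ σ : V ≃ Fin n, ∀ u v : V, σ u ≤ σ v → f u ≤ f v := by
  let e : V ≃ Fin n := Fintype.equivFinOfCardEq hn
  refine ⟨e.trans (Tuple.sort (f ∘ e.symm)).symm, fun u v huv => ?_⟩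
  simpa using Tuple.monotone_sort (f ∘ e.symm) huv

theorem IsIntervalRep.adj_of_rightEnd_le {V : Type*} {G : SimpleGraph V} {l r : V → ℝ}
    (hrep : IsIntervalRep G l r) {u v w : V} (huw : u ≠ w) (hvw : v ≠ w)
    (hruv : r u ≤ r v) (hrvw : r v ≤ r w) (hadj : G.Adj u w) : G.Adj v w := by
  obtain ⟨hlr, hadj_iff⟩ := hrep
  obtain ⟨x, ⟨-, hxu⟩, hwx, -⟩ := (hadj_iff u w huw).mp hadj
  exact (hadj_iff v w hvw).mpr
    ⟨r v, ⟨hlr v, le_rfl⟩, (hwx.trans hxu).trans hruv, hrvw⟩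

/-- Every finite interval graph of order `n` admits a numbering `σ : V ≃ Fin n` of its
vertices such that whenever `σ u < σ v < σ w` and `u` is adjacent to `w`, also `v` is
adjacent to `w`. -/
theorem exists_goodNumbering_of_intervalGraph
    {V : Type*} [Fintype V] (G : SimpleGraph V) (n : ℕ) (hn : Fintype.card V = n)
    (l r : V → ℝ) (hrep : IsIntervalRep G l r) :
    ∃ σ : V ≃ Fin n, ∀ u v w : V, σ u < σ v → σ v < σ w → G.Adj u w → G.Adj v w := by
  obtain ⟨σ, hσ⟩ := exists_equiv_fin_monotone hn r
  refine ⟨σ, fun u v w huv hvw hadj => ?_⟩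
  exact hrep.adj_of_rightEnd_le (by rintro rfl; exact (huv.trans hvw).false)
    (by rintro rfl; exact hvw.false) (hσ u v huv.le) (hσ v w hvw.le) hadj
end

section
/- For each i ∈ [1,n], the set [maxlow(i), i] is a clique of G, i.e., any two distinct vertices of [maxlow(i), i] are adjacent. -/
/-- `G` is a graph with vertex set `{1,…,n}` (all edges lie inside `{1,…,n}`),
whose adjacency satisfies the interval-graph numbering property: whenever
`i < j < k` and `i` is adjacent to `k`, then `j` is adjacent to `k`. -/
def GoodNumbering (G : SimpleGraph ℕ) (n : ℕ) : Prop :=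
  (∀ u v : ℕ, G.Adj u v → u ∈ Finset.Icc 1 n ∧ v ∈ Finset.Icc 1 n) ∧
  (∀ i j k : ℕ, i < j → j < k → G.Adj i k → G.Adj j k)

/-- `low a = min N[a]`, the minimum of the closed neighborhood of `a`. -/
noncomputable def low (G : SimpleGraph ℕ) (a : ℕ) : ℕ :=
  sInf {b : ℕ | b = a ∨ G.Adj a b}

/-- `lowI a b = min {low k : k ∈ [a,b]}`. -/
noncomputable def lowI (G : SimpleGraph ℕ) (a b : ℕ) : ℕ :=
  sInf (low G '' Set.Icc a b)

/-- `maxlow a = max {low k : low a ≤ k ≤ a}`. -/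
noncomputable def maxlow (G : SimpleGraph ℕ) (a : ℕ) : ℕ :=
  sSup (low G '' Set.Icc (low G a) a)

/-! Every `v ∈ [maxlow i, i]` has `low v ≤ maxlow i`, because `low i ≤ maxlow i ≤ v ≤ i`. Since `v`
is adjacent to `low v`, the numbering property makes it adjacent to every vertex of `[low v, v)`,
in particular to every smaller vertex of `[maxlow i, i]`. -/

lemma low_le_self (G : SimpleGraph ℕ) (a : ℕ) : low G a ≤ a :=
  Nat.sInf_le (Or.inl rfl)

lemma adj_low_of_lt {G : SimpleGraph ℕ} {a : ℕ} (h : low G a < a) : G.Adj (low G a) a := by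
  have hmem : low G a = a ∨ G.Adj a (low G a) :=
    Nat.sInf_mem (s := {b | b = a ∨ G.Adj a b}) ⟨a, Or.inl rfl⟩
  exact (hmem.resolve_left h.ne).symm

section IntervalNumbering

variable {G : SimpleGraph ℕ} (hG : ∀ i j k : ℕ, i < j → j < k → G.Adj i k → G.Adj j k)
include hG

lemma adj_of_low_le {u v : ℕ} (hlow : low G v ≤ u) (huv : u < v) : G.Adj u v := by
  have hadj := adj_low_of_lt (hlow.trans_lt huv)
  rcases hlow.eq_or_lt with h | h
  · exact h ▸ hadj
  · exact hG _ _ _ h huv hadj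

lemma isClique_Icc_of_low_le {a b : ℕ} (hlow : ∀ v ∈ Set.Icc a b, low G v ≤ a) :
    G.IsClique (Set.Icc a b) := by
  intro u hu v hv huv
  rcases huv.lt_or_gt with h | h
  · exact adj_of_low_le hG ((hlow v hv).trans hu.1) h
  · exact (adj_of_low_le hG ((hlow u hu).trans hv.1) h).symm

end IntervalNumbering

lemma low_le_maxlow (G : SimpleGraph ℕ) {i v : ℕ} (h1 : low G i ≤ v) (h2 : v ≤ i) :
    low G v ≤ maxlow G i :=
  le_csSup ((Set.finite_Icc _ _).image _).bddAbove ⟨v, ⟨h1, h2⟩, rfl⟩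

lemma low_le_maxlow_self (G : SimpleGraph ℕ) (i : ℕ) : low G i ≤ maxlow G i :=
  low_le_maxlow G (low_le_self G i) le_rfl

theorem maxlow_Icc_isClique_general (G : SimpleGraph ℕ) (n : ℕ)
    (hG : GoodNumbering G n) (i : ℕ) :
    ∀ u ∈ Finset.Icc (maxlow G i) i, ∀ v ∈ Finset.Icc (maxlow G i) i,
      u ≠ v → G.Adj u v := by
  have hclique : G.IsClique (Set.Icc (maxlow G i) i) :=
    isClique_Icc_of_low_le hG.2 fun v hv =>
      low_le_maxlow G ((low_le_maxlow_self G i).trans hv.1) hv.2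
  intro u hu v hv
  exact hclique (Finset.mem_Icc.mp hu) (Finset.mem_Icc.mp hv)

/-- For each `i ∈ [1,n]`, the set `[maxlow(i), i]` is a clique of `G`. -/
theorem maxlow_Icc_isClique (G : SimpleGraph ℕ) (n : ℕ) (hn : 1 ≤ n)
    (hG : GoodNumbering G n) (i : ℕ) (hi : i ∈ Finset.Icc 1 n) :
    ∀ u ∈ Finset.Icc (maxlow G i) i, ∀ v ∈ Finset.Icc (maxlow G i) i,
      u ≠ v → G.Adj u v :=
  maxlow_Icc_isClique_general G n hG i
end

section
/- For each i ∈ [1,n], there is a vertex k ∈ [maxlow(i), i] such that k is adjacent to no vertex l ∈ [1, maxlow(i)). -/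
namespace SimpleGraph

variable (G : SimpleGraph ℕ)

theorem low_le_self (a : ℕ) : low G a ≤ a :=
  Nat.sInf_le (Or.inl rfl)

theorem low_le_of_adj {a b : ℕ} (h : G.Adj a b) : low G a ≤ b :=
  Nat.sInf_le (Or.inr h)

theorem exists_low_eq_maxlow (i : ℕ) : ∃ k ∈ Set.Icc (low G i) i, low G k = maxlow G i := by
  have hne : (low G '' Set.Icc (low G i) i).Nonempty :=
    ⟨low G i, i, ⟨low_le_self G i, le_rfl⟩, rfl⟩
  have hbdd : BddAbove (low G '' Set.Icc (low G i) i) := by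
    refine ⟨i, ?_⟩
    rintro _ ⟨k, ⟨_, hki⟩, rfl⟩
    exact (low_le_self G k).trans hki
  exact Nat.sSup_mem hne hbdd

end SimpleGraph

theorem exists_vertex_not_adj_below_maxlow_general (G : SimpleGraph ℕ) (i : ℕ) :
    ∃ k ∈ Finset.Icc (maxlow G i) i, ∀ l ∈ Finset.Ico 1 (maxlow G i), ¬ G.Adj k l := by
  -- a vertex realising `maxlow i` as its `low` has no neighbour below `maxlow i`
  obtain ⟨k, ⟨-, hki⟩, hk⟩ := G.exists_low_eq_maxlow i
  refine ⟨k, Finset.mem_Icc.2 ⟨hk ▸ G.low_le_self k, hki⟩, fun l hl hadj => ?_⟩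
  exact (Finset.mem_Ico.1 hl).2.not_ge (hk ▸ G.low_le_of_adj hadj)

/-- For each `i ∈ [1,n]`, there is a vertex `k ∈ [maxlow(i), i]` adjacent to no
vertex `l ∈ [1, maxlow(i))`. -/
theorem exists_vertex_not_adj_below_maxlow (G : SimpleGraph ℕ) (n : ℕ) (hn : 1 ≤ n)
    (hG : GoodNumbering G n) (i : ℕ) (hi : i ∈ Finset.Icc 1 n) :
    ∃ k ∈ Finset.Icc (maxlow G i) i, ∀ l ∈ Finset.Ico 1 (maxlow G i), ¬ G.Adj k l :=
  exists_vertex_not_adj_below_maxlow_general G i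
end

section
/- Let i ∈ [1,n] and let D be a [1,2]-dominating set of G[1,i] of minimum cardinality among all [1,2]-dominating sets of G[1,i] containing i, with i ∈ D. Suppose D ∩ [1,i) is nonempty with maximum element i', that D ∩ [1,i') is nonempty with maximum element i'', and that low(i) < i''. Then x ∈ D for all x ∈ [low(i), i''). -/
/-- `D` is a `[1,2]`-dominating set of the induced subgraph `G[1,i]`:
`D ⊆ [1,i]` and every vertex of `[1,i]` outside `D` has at least one and at
most two neighbors in `D`. -/
def Dom12 (G : SimpleGraph ℕ) (i : ℕ) (D : Finset ℕ) : Prop :=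
  D ⊆ Finset.Icc 1 i ∧
  ∀ v ∈ Finset.Icc 1 i, v ∉ D →
    1 ≤ {u ∈ (D : Set ℕ) | G.Adj v u}.ncard ∧ {u ∈ (D : Set ℕ) | G.Adj v u}.ncard ≤ 2

/-- The minimum (in `ℕ∞`, with `sInf ∅ = ⊤`) of the cardinalities of the
`[1,2]`-dominating sets `D` of `G[1,i]` satisfying the extra property `P`. -/
noncomputable def gval (G : SimpleGraph ℕ) (i : ℕ) (P : Finset ℕ → Prop) : ℕ∞ :=
  sInf {k : ℕ∞ | ∃ D : Finset ℕ, Dom12 G i D ∧ P D ∧ (D.card : ℕ∞) = k}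

/-- `γ_{[1,2]}(i)`. -/
noncomputable def g12 (G : SimpleGraph ℕ) (i : ℕ) : ℕ∞ :=
  gval G i fun _ => True

/-- `γ⁰_{[1,2]}(j,i)`: no vertex of `[j,i]` is in `D`. -/
noncomputable def g0I (G : SimpleGraph ℕ) (j i : ℕ) : ℕ∞ :=
  gval G i fun D => ∀ x ∈ Finset.Icc j i, x ∉ D

/-- `γ⁰_{[1,2]}(j,i:k)`: `k ∈ D` and no other vertex of `[j,i]` is in `D`. -/
noncomputable def g0Ik (G : SimpleGraph ℕ) (j i k : ℕ) : ℕ∞ :=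
  gval G i fun D => k ∈ D ∧ ∀ x ∈ Finset.Icc j i, x ≠ k → x ∉ D

/-- `γ¹_{[1,2]}(i)`: `i ∈ D`. -/
noncomputable def g1 (G : SimpleGraph ℕ) (i : ℕ) : ℕ∞ :=
  gval G i fun D => i ∈ D

/-- `γ¹_{[1,2]}(j,i:i)`: `i ∈ D` and no vertex of `[j,i)` is in `D`. -/
noncomputable def g1I (G : SimpleGraph ℕ) (j i : ℕ) : ℕ∞ :=
  gval G i fun D => i ∈ D ∧ ∀ x ∈ Finset.Ico j i, x ∉ D

/-- `γ¹_{[1,2]}(k,i:i,j)`: `i, j ∈ D` and no other vertex of `[k,i)` is in `D`. -/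
noncomputable def g1Ij (G : SimpleGraph ℕ) (k i j : ℕ) : ℕ∞ :=
  gval G i fun D => i ∈ D ∧ j ∈ D ∧ ∀ x ∈ Finset.Ico k i, x ≠ j → x ∉ D

/-- `γ¹_{[1,2]}(l,i:i,j,k)`: `i, j, k ∈ D` and no other vertex of `[l,i)` is in `D`. -/
noncomputable def g1Ijk (G : SimpleGraph ℕ) (l i j k : ℕ) : ℕ∞ :=
  gval G i fun D => i ∈ D ∧ j ∈ D ∧ k ∈ D ∧ ∀ x ∈ Finset.Ico l i, x ≠ j → x ≠ k → x ∉ D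

/-- `γ¹¹_{[1,2]}(l,i:i,j,k)`: `i, j ∈ D`, all of `[l,k] ⊆ D`, and no vertex of
`(k,i)` other than `j` is in `D`. -/
noncomputable def g11Ijk (G : SimpleGraph ℕ) (l i j k : ℕ) : ℕ∞ :=
  gval G i fun D => i ∈ D ∧ j ∈ D ∧ (∀ x ∈ Finset.Icc l k, x ∈ D) ∧
    ∀ x ∈ Finset.Ioo k i, x ≠ j → x ∉ D

/-! If some `x ∈ [low(i), i'')` were missing from `D`, then `x` would be adjacent to `i`, and
since `x` has at most two neighbours in `D`, at most one vertex `j ∈ D \ {i}` is adjacent to `x`.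
By the numbering property every other vertex of `D` above `x` has all its neighbours above `x`,
so `(D ∩ [1,x]) ∪ {j, i}` is still a `[1,2]`-dominating set of `G[1,i]`: the vertices of `(x,i)`
are dominated by `i` alone. It contains `i` and drops `i'` or `i''`, contradicting minimality. -/

theorem Set.exists_mem_subset_pair_of_ncard_le_two {α : Type*} {s : Set α} {a : α}
    (hs : s.Finite) (h : s.ncard ≤ 2) (ha : a ∈ s) : ∃ b ∈ s, s ⊆ {a, b} := by
  by_cases hb : ∃ b ∈ s, b ≠ a
  · obtain ⟨b, hbs, hba⟩ := hb
    refine ⟨b, hbs, fun c hc => ?_⟩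
    by_contra hc'
    simp only [Set.mem_insert_iff, Set.mem_singleton_iff, not_or] at hc'
    have habc : ({a, b, c} : Set α).ncard = 3 :=
      Set.ncard_eq_three.mpr ⟨a, b, c, hba.symm, Ne.symm hc'.1, Ne.symm hc'.2, rfl⟩
    have := Set.ncard_le_ncard (Set.insert_subset ha (Set.insert_subset hbs
      (Set.singleton_subset_iff.mpr hc))) hs
    omega
  · push Not at hb
    exact ⟨a, ha, fun c hc => Or.inl (hb c hc)⟩

theorem Finset.mem_filter_le_union_pair {D : Finset ℕ} {x j i u : ℕ} :
    u ∈ D.filter (· ≤ x) ∪ {j, i} ↔ (u ∈ D ∧ u ≤ x) ∨ u = j ∨ u = i := by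
  simp only [Finset.mem_union, Finset.mem_filter, Finset.mem_insert, Finset.mem_singleton]

theorem Finset.card_filter_le_union_pair_lt {D : Finset ℕ} {x : ℕ}
    (h : 2 < (D.filter (x < ·)).card) (j i : ℕ) :
    (D.filter (· ≤ x) ∪ {j, i}).card < D.card := by
  have hsplit := Finset.card_filter_add_card_filter_not (s := D) (· ≤ x)
  simp only [not_le] at hsplit
  calc (D.filter (· ≤ x) ∪ {j, i}).card ≤ (D.filter (· ≤ x)).card + 2 :=
        (Finset.card_union_le _ _).trans (by gcongr; exact Finset.card_le_two)
    _ < D.card := by omega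

theorem low_eq_or_adj (G : SimpleGraph ℕ) (a : ℕ) : low G a = a ∨ G.Adj a (low G a) :=
  Nat.sInf_mem (s := {b | b = a ∨ G.Adj a b}) ⟨a, Or.inl rfl⟩

section IntervalNumbering

variable {G : SimpleGraph ℕ} (hG : ∀ i j k : ℕ, i < j → j < k → G.Adj i k → G.Adj j k)
include hG

theorem adj_of_low_le_s8 {v k : ℕ} (hv : low G k ≤ v) (hvk : v < k) : G.Adj v k := by
  rcases low_eq_or_adj G k with h | h
  · omega
  rcases hv.eq_or_lt with rfl | hlt
  · exact h.symm
  · exact hG _ _ _ hlt hvk h.symm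

theorem lt_of_adj_of_not_adj {x d w : ℕ} (hxd : x < d) (hnot : ¬ G.Adj x d) (hw : G.Adj d w) :
    x < w := by
  by_contra! hwx
  rcases hwx.eq_or_lt with rfl | hlt
  · exact hnot hw.symm
  · exact hnot (hG _ _ _ hlt hxd hw.symm)

end IntervalNumbering

namespace Dom12

variable {G : SimpleGraph ℕ} {i : ℕ} {D : Finset ℕ}

theorem exists_adj (hD : Dom12 G i D) {v : ℕ} (hv : v ∈ Finset.Icc 1 i) (hvD : v ∉ D) :
    ∃ u ∈ D, G.Adj v u := by
  obtain ⟨u, hu⟩ := Set.nonempty_of_ncard_ne_zero (s := {u ∈ (D : Set ℕ) | G.Adj v u})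
    (by have := (hD.2 v hv hvD).1; omega)
  exact ⟨u, hu⟩

theorem exists_mem_adj_subset_pair (hD : Dom12 G i D) {v a : ℕ} (hv : v ∈ Finset.Icc 1 i)
    (hvD : v ∉ D) (haD : a ∈ D) (hva : G.Adj v a) :
    ∃ b ∈ D, ∀ u ∈ D, G.Adj v u → u = a ∨ u = b := by
  obtain ⟨b, ⟨hbD, -⟩, hsub⟩ := Set.exists_mem_subset_pair_of_ncard_le_two
    (D.finite_toSet.sep _) (hD.2 v hv hvD).2
    (show a ∈ {u ∈ (D : Set ℕ) | G.Adj v u} from ⟨haD, hva⟩)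
  exact ⟨b, hbD, fun u huD hvu => hsub ⟨huD, hvu⟩⟩

section Exchange

variable {x j : ℕ} (hcover : ∀ v, x < v → v < i → G.Adj v i)
  (hfar : ∀ d ∈ D, x < d → d ≠ i → d ≠ j → ∀ w, G.Adj d w → x < w)

include hcover hfar in
theorem exists_adj_filter_le_union_pair (hD : Dom12 G i D) {v : ℕ} (hv : v ∈ Finset.Icc 1 i)
    (hvD' : v ∉ D.filter (· ≤ x) ∪ {j, i}) : ∃ u ∈ D.filter (· ≤ x) ∪ {j, i}, G.Adj v u := by
  simp only [Finset.mem_filter_le_union_pair, not_or, not_and, not_le] at hvD' ⊢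
  by_cases hvx : v ≤ x
  · obtain ⟨e, heD, hve⟩ := hD.exists_adj hv fun h => (hvD'.1 h).not_ge hvx
    refine ⟨e, ?_, hve⟩
    by_contra! he
    exact (hfar e heD (he.1 heD) he.2.2 he.2.1 v hve.symm).not_ge hvx
  · exact ⟨i, Or.inr (Or.inr rfl),
      hcover v (by omega) (lt_of_le_of_ne (Finset.mem_Icc.1 hv).2 hvD'.2.2)⟩

include hcover hfar in
theorem filter_le_union_pair (hD : Dom12 G i D) (hiD : i ∈ D) (hjD : j ∈ D) :
    Dom12 G i (D.filter (· ≤ x) ∪ {j, i}) := by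
  set D' := D.filter (· ≤ x) ∪ {j, i}
  have hD'D : D' ⊆ D := fun u hu => by
    rcases Finset.mem_filter_le_union_pair.1 hu with h | rfl | rfl
    exacts [h.1, hjD, hiD]
  refine ⟨hD'D.trans hD.1, fun v hv hvD' => ⟨?_, ?_⟩⟩
  · obtain ⟨u, hu, hvu⟩ := exists_adj_filter_le_union_pair hcover hfar hD hv hvD'
    exact Nat.one_le_iff_ne_zero.mpr
      ((Set.ncard_pos ((D'.finite_toSet.sep _))).mpr ⟨u, hu, hvu⟩).ne'
  by_cases hvD : v ∈ D
  · have hv' : x < v ∧ v ≠ j ∧ v ≠ i := by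
      simp only [D', Finset.mem_filter_le_union_pair, not_or, not_and, not_le] at hvD'
      exact ⟨hvD'.1 hvD, hvD'.2⟩
    calc {u ∈ (D' : Set ℕ) | G.Adj v u}.ncard ≤ ({j, i} : Set ℕ).ncard :=
          Set.ncard_le_ncard (fun u ⟨hu, hvu⟩ => by
            have := hfar v hvD hv'.1 hv'.2.2 hv'.2.1 u hvu
            rcases Finset.mem_filter_le_union_pair.1 hu with h | h | h
            · omega
            · exact Or.inl h
            · exact Or.inr h) (Set.toFinite _)
      _ ≤ 2 := (Set.ncard_insert_le j {i}).trans (by rw [Set.ncard_singleton])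
  · calc {u ∈ (D' : Set ℕ) | G.Adj v u}.ncard ≤ {u ∈ (D : Set ℕ) | G.Adj v u}.ncard :=
          Set.ncard_le_ncard (fun u hu => ⟨hD'D hu.1, hu.2⟩) (D.finite_toSet.sep _)
      _ ≤ 2 := (hD.2 v hv hvD).2

end Exchange

end Dom12

theorem mem_of_lt_sndMax_general (G : SimpleGraph ℕ) (n : ℕ)
    (hG : GoodNumbering G n) (i : ℕ)
    (D : Finset ℕ) (hD : Dom12 G i D) (hiD : i ∈ D)
    (hmin : ∀ D' : Finset ℕ, Dom12 G i D' → i ∈ D' → D.card ≤ D'.card)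
    (i' i'' : ℕ)
    (hi'mem : i' ∈ D) (hi'lt : i' < i)
    (hi''mem : i'' ∈ D) (hi''lt : i'' < i') :
    ∀ x ∈ Finset.Ico (low G i) i'', x ∈ D := by
  intro x hx
  rw [Finset.mem_Ico] at hx
  by_contra hxD
  have hxi : G.Adj x i := adj_of_low_le_s8 hG.2 hx.1 (by omega)
  have hxI : x ∈ Finset.Icc 1 i :=
    Finset.mem_Icc.2 ⟨(Finset.mem_Icc.1 (hG.1 x i hxi).1).1, by omega⟩
  obtain ⟨j, hjD, hj⟩ := hD.exists_mem_adj_subset_pair hxI hxD hiD hxi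
  have hD' := hD.filter_le_union_pair
    (fun v hxv hvi => adj_of_low_le_s8 hG.2 (by omega) hvi)
    (fun d hdD hxd hdi hdj _ => lt_of_adj_of_not_adj hG.2 hxd fun hxd' =>
      (hj d hdD hxd').elim hdi hdj) hiD hjD
  have hbig : 2 < (D.filter (x < ·)).card := Finset.two_lt_card.2
    ⟨i'', by simp [hi''mem, hx.2], i', by simp [hi'mem]; omega, i, by simp [hiD]; omega,
      by omega, by omega, by omega⟩
  exact (hmin _ hD' (by simp)).not_gt (Finset.card_filter_le_union_pair_lt hbig j i)

/-- Lemma: if `D` is a minimum-cardinality `[1,2]`-dominating set of `G[1,i]` among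
those containing `i`, `i' = max (D ∩ [1,i))`, `i'' = max (D ∩ [1,i'))` both exist and
`low(i) < i''`, then every `x ∈ [low(i), i'')` belongs to `D`. -/
theorem mem_of_lt_sndMax (G : SimpleGraph ℕ) (n : ℕ) (hn : 1 ≤ n)
    (hG : GoodNumbering G n) (i : ℕ) (hi : i ∈ Finset.Icc 1 n)
    (D : Finset ℕ) (hD : Dom12 G i D) (hiD : i ∈ D)
    (hmin : ∀ D' : Finset ℕ, Dom12 G i D' → i ∈ D' → D.card ≤ D'.card)
    (i' i'' : ℕ)
    (hi'mem : i' ∈ D) (hi'lt : i' < i) (hi'max : ∀ x ∈ D, x < i → x ≤ i')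
    (hi''mem : i'' ∈ D) (hi''lt : i'' < i') (hi''max : ∀ x ∈ D, x < i' → x ≤ i'')
    (hlow : low G i < i'') :
    ∀ x ∈ Finset.Ico (low G i) i'', x ∈ D :=
  mem_of_lt_sndMax_general G n hG i D hD hiD hmin i' i'' hi'mem hi'lt hi''mem hi''lt
end

section
/- Let i ∈ [1,n] and b = low(i). If b = i, then γ^1_{[1,2]}(i) = γ_{[1,2]}(i−1) + 1. -/
/-!
Since `low i = i`, the vertex `i` has no neighbour in `[1, i-1]`. Hence adding `i` to, or removing
it from, a set `D` does not change the `D`-neighbours of any vertex below `i`, so `D' ↦ D' ∪ {i}`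
sends `[1,2]`-dominating sets of `G[1,i-1]` to those of `G[1,i]` containing `i`, and `D ↦ D \ {i}`
goes back; the cardinalities differ by exactly one.
-/

variable {G : SimpleGraph ℕ}

lemma gval_le_card {i : ℕ} {P : Finset ℕ → Prop} {D : Finset ℕ} (hD : Dom12 G i D) (hP : P D) :
    gval G i P ≤ D.card :=
  sInf_le ⟨D, hD, hP, rfl⟩

lemma le_gval {i : ℕ} {P : Finset ℕ → Prop} {k : ℕ∞}
    (h : ∀ D, Dom12 G i D → P D → k ≤ D.card) : k ≤ gval G i P :=
  le_sInf <| by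
    rintro _ ⟨D, hD, hP, rfl⟩
    exact h D hD hP

lemma exists_card_eq_gval {i : ℕ} {P : Finset ℕ → Prop} (h : gval G i P ≠ ⊤) :
    ∃ D, Dom12 G i D ∧ P D ∧ (D.card : ℕ∞) = gval G i P := by
  have hne : {k : ℕ∞ | ∃ D, Dom12 G i D ∧ P D ∧ (D.card : ℕ∞) = k}.Nonempty :=
    Set.nonempty_iff_ne_empty.2 fun hempty => h (by rw [gval, hempty, sInf_empty])
  exact csInf_mem hne

lemma not_adj_of_lt_of_low_eq_self {i v : ℕ} (hb : low G i = i) (hv : v < i) : ¬ G.Adj v i :=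
  fun h => (hb ▸ (Nat.sInf_le (Or.inr h.symm) : low G i ≤ v) : i ≤ v).not_gt hv

lemma setOf_adj_congr {s t : Set ℕ} {v i : ℕ} (hvi : ¬ G.Adj v i)
    (hst : ∀ u, u ≠ i → (u ∈ s ↔ u ∈ t)) :
    {u ∈ s | G.Adj v u} = {u ∈ t | G.Adj v u} := by
  ext u
  by_cases hu : u = i
  · subst hu
    simp [hvi]
  · simp [hst u hu]

section NoLowerNeighbour

variable {i : ℕ} {D : Finset ℕ} (hlow : ∀ v < i, ¬ G.Adj v i)
include hlow

lemma Dom12.insert_of_forall_not_adj (hi : 1 ≤ i) (hD : Dom12 G (i - 1) D) :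
    Dom12 G i (insert i D) := by
  refine ⟨Finset.insert_subset (Finset.mem_Icc.2 ⟨hi, le_rfl⟩) (hD.1.trans ?_), ?_⟩
  · exact Finset.Icc_subset_Icc_right (Nat.sub_le i 1)
  · intro v hv hvD
    have hvi : v < i :=
      lt_of_le_of_ne (Finset.mem_Icc.1 hv).2 fun h => hvD (h ▸ D.mem_insert_self i)
    rw [setOf_adj_congr (hlow v hvi) (t := D) fun u hu => by simp [hu]]
    exact hD.2 v (Finset.mem_Icc.2 ⟨(Finset.mem_Icc.1 hv).1, by omega⟩)
      fun h => hvD (Finset.mem_insert_of_mem h)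

lemma Dom12.erase_of_forall_not_adj (hD : Dom12 G i D) : Dom12 G (i - 1) (D.erase i) := by
  refine ⟨fun x hx => ?_, fun v hv hvD => ?_⟩
  · have hx' := Finset.mem_Icc.1 (hD.1 (Finset.mem_of_mem_erase hx))
    have := Finset.ne_of_mem_erase hx
    exact Finset.mem_Icc.2 ⟨hx'.1, by omega⟩
  · have hv' := Finset.mem_Icc.1 hv
    have hvi : v < i := by omega
    rw [setOf_adj_congr (hlow v hvi) (t := D) fun u hu => by simp [hu]]
    exact hD.2 v (Finset.mem_Icc.2 ⟨hv'.1, hvi.le⟩) fun h => hvD (Finset.mem_erase.2 ⟨hvi.ne, h⟩)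

end NoLowerNeighbour

theorem g1_eq_of_low_eq_self_general (G : SimpleGraph ℕ) (n : ℕ) (i : ℕ) (hi : i ∈ Finset.Icc 1 n)
    (hb : low G i = i) :
    g1 G i = g12 G (i - 1) + 1 := by
  have hi1 : 1 ≤ i := (Finset.mem_Icc.1 hi).1
  have hlow : ∀ v < i, ¬ G.Adj v i := fun v => not_adj_of_lt_of_low_eq_self hb
  apply le_antisymm
  · rcases eq_or_ne (g12 G (i - 1)) ⊤ with htop | htop
    · simp [htop]
    obtain ⟨D, hD, -, hcard⟩ := exists_card_eq_gval htop
    have hiD : i ∉ D := fun h => by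
      have := (Finset.mem_Icc.1 (hD.1 h)).2
      omega
    calc g1 G i ≤ (insert i D).card :=
          gval_le_card (hD.insert_of_forall_not_adj hlow hi1) (D.mem_insert_self i)
      _ = g12 G (i - 1) + 1 := by
          rw [Finset.card_insert_of_notMem hiD, Nat.cast_add_one, hcard, g12]
  · refine le_gval fun D hD hiD => ?_
    calc g12 G (i - 1) + 1 ≤ (D.erase i).card + 1 := by
          gcongr
          exact gval_le_card (hD.erase_of_forall_not_adj hlow) trivial
      _ = D.card := by exact_mod_cast Finset.card_erase_add_one hiD

/-- Lemma (i): if `low(i) = i` then `γ¹_{[1,2]}(i) = γ_{[1,2]}(i-1) + 1`. -/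
theorem g1_eq_of_low_eq_self (G : SimpleGraph ℕ) (n : ℕ) (hn : 1 ≤ n)
    (hG : GoodNumbering G n) (i : ℕ) (hi : i ∈ Finset.Icc 1 n)
    (hb : low G i = i) :
    g1 G i = g12 G (i - 1) + 1 :=
  g1_eq_of_low_eq_self_general G n i hi hb
end

section
/- Let i ∈ [1,n], j ∈ [1,i), k ∈ [1,j], b = low(i), c = low(j), d = low(j+1, i−1), and z = max{x ∈ (j,i) : low(x) = d}. Assume that neither (j < b and j < low(x) for some x ∈ (j,b)) nor (k < min{b,c} and k ≤ low(x) for some x ∈ [k, min{b,c})) holds, and assume j < b and z ≥ b. Then: (a) if k = j ≤ d, then γ^1_{[1,2]}(k,i:i,j) = γ^1_{[1,2]}(j) + 1; (b) if k < j and k ≤ d, then γ^1_{[1,2]}(k,i:i,j) = γ^1_{[1,2]}(k, j : j) + 1; (c) if d < k, then γ^1_{[1,2]}(k,i:i,j) = γ^1_{[1,2]}(d, j : j) + 1. -/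
/-! Since `j < low i`, the vertex `i` has no neighbour in `[1,j]`, and a set counted by
`γ¹(k,i:i,j)` meets `(j,i)` nowhere; so `D ↦ D \ {i}` matches these sets with the
`[1,2]`-dominating sets of `G[1,j]` that contain `j` and avoid `[min k d, j)`.
Going back, a vertex `v ∈ (j,i)` has all its neighbours below `j` in `[d, j]`, so it sees only
`i` and `j`, and it sees at least one of them: `j` if `v < low i` (by the first excluded
configuration), `i` otherwise. When `d < k`, the vertex `z ≥ low i` is adjacent to `i`, to `j` and
to every vertex of `[d, k)`, so `D` cannot contain any of the latter. Hence in all three cases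
`γ¹(k,i:i,j) = γ¹(min k d, j:j) + 1`. -/

variable {G : SimpleGraph ℕ}

lemma low_le_of_adj {a b : ℕ} (h : G.Adj a b) : low G a ≤ b :=
  Nat.sInf_le (Or.inr h)

lemma low_eq_or_adj_low (a : ℕ) : low G a = a ∨ G.Adj a (low G a) :=
  Nat.sInf_mem (⟨a, Or.inl rfl⟩ : {b : ℕ | b = a ∨ G.Adj a b}.Nonempty)

lemma not_adj_of_lt_low {v i : ℕ} (h : v < low G i) : ¬ G.Adj v i :=
  fun hvi => (low_le_of_adj hvi.symm).not_gt h

lemma adj_iff_low_le (hG : ∀ a b c : ℕ, a < b → b < c → G.Adj a c → G.Adj b c)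
    {x y : ℕ} (hyx : y < x) : G.Adj x y ↔ low G x ≤ y := by
  refine ⟨low_le_of_adj, fun h => ?_⟩
  rcases low_eq_or_adj_low (G := G) x with hx | hx
  · omega
  rcases h.eq_or_lt with heq | hlt
  · exact heq ▸ hx
  · exact (hG _ _ _ hlt hyx hx.symm).symm

lemma lowI_le_low {a b v : ℕ} (hv : v ∈ Set.Icc a b) : lowI G a b ≤ low G v :=
  Nat.sInf_le (Set.mem_image_of_mem _ hv)

lemma Nat.sSup_mem_of_pos {s : Set ℕ} (hs : BddAbove s) (h : 0 < sSup s) : sSup s ∈ s :=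
  Nat.sSup_mem (Set.nonempty_iff_ne_empty.2 fun he => by simp [he] at h) hs

lemma sep_adj_insert_of_not_adj {D : Finset ℕ} {v i : ℕ} (h : ¬ G.Adj v i) :
    {u ∈ (↑(insert i D) : Set ℕ) | G.Adj v u} = {u ∈ (↑D : Set ℕ) | G.Adj v u} := by
  ext u
  simp only [Finset.coe_insert, Set.mem_insert_iff, Finset.mem_coe]
  constructor
  · rintro ⟨rfl | hu, huv⟩
    · exact absurd huv h
    · exact ⟨hu, huv⟩
  · exact fun ⟨hu, huv⟩ => ⟨Or.inr hu, huv⟩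

lemma sep_adj_erase_of_not_adj {D : Finset ℕ} {v i : ℕ} (h : ¬ G.Adj v i) :
    {u ∈ (↑(D.erase i) : Set ℕ) | G.Adj v u} = {u ∈ (↑D : Set ℕ) | G.Adj v u} := by
  ext u
  simp only [Finset.coe_erase, Set.mem_sdiff, Set.mem_singleton_iff, Finset.mem_coe]
  exact ⟨fun ⟨⟨hu, _⟩, huv⟩ => ⟨hu, huv⟩,
    fun ⟨hu, huv⟩ => ⟨⟨hu, by rintro rfl; exact h huv⟩, huv⟩⟩

lemma one_le_ncard_and_ncard_le_two {s : Set ℕ} {a b : ℕ} (hs : s ⊆ {a, b})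
    (hne : s.Nonempty) : 1 ≤ s.ncard ∧ s.ncard ≤ 2 := by
  have hfin : s.Finite := (Set.toFinite {a, b}).subset hs
  refine ⟨(Set.ncard_pos hfin).2 hne, ?_⟩
  calc s.ncard ≤ ({a, b} : Set ℕ).ncard := Set.ncard_le_ncard hs
    _ ≤ ({b} : Set ℕ).ncard + 1 := Set.ncard_insert_le a {b}
    _ = 2 := by rw [Set.ncard_singleton]

namespace Dom12

variable {i j : ℕ} {D : Finset ℕ}

lemma mem_of_three_adj (hD : Dom12 G i D) {v x y w : ℕ} (hv : v ∈ Finset.Icc 1 i)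
    (hxy : x ≠ y) (hxw : x ≠ w) (hyw : y ≠ w) (hx : x ∈ D) (hy : y ∈ D) (hw : w ∈ D)
    (hvx : G.Adj v x) (hvy : G.Adj v y) (hvw : G.Adj v w) : v ∈ D := by
  by_contra hvD
  have hsub : ({x, y, w} : Set ℕ) ⊆ {u ∈ (D : Set ℕ) | G.Adj v u} := by
    rintro u (rfl | rfl | rfl)
    exacts [⟨hx, hvx⟩, ⟨hy, hvy⟩, ⟨hw, hvw⟩]
  have h3 : ({x, y, w} : Set ℕ).ncard = 3 := Set.ncard_eq_three.2 ⟨x, y, w, hxy, hxw, hyw, rfl⟩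
  have hle := Set.ncard_le_ncard hsub (D.finite_toSet.subset fun u hu => hu.1)
  have := (hD.2 v hv hvD).2
  omega

lemma erase_of_lt_low (hD : Dom12 G i D) (hji : j < i) (hlow : j < low G i)
    (hDj : ∀ x ∈ D, x ≠ i → x ≤ j) : Dom12 G j (D.erase i) := by
  refine ⟨fun u hu => ?_, fun v hv hvD => ?_⟩
  · obtain ⟨hui, huD⟩ := Finset.mem_erase.1 hu
    exact Finset.mem_Icc.2 ⟨(Finset.mem_Icc.1 (hD.1 huD)).1, hDj u huD hui⟩
  · obtain ⟨hv1, hvj⟩ := Finset.mem_Icc.1 hv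
    rw [sep_adj_erase_of_not_adj (not_adj_of_lt_low (by omega))]
    exact hD.2 v (Finset.mem_Icc.2 ⟨hv1, by omega⟩)
      fun h => hvD (Finset.mem_erase.2 ⟨by omega, h⟩)

lemma insert_of_lt_low (hD : Dom12 G j D) (hji : j < i) (hlow : j < low G i)
    (hnew : ∀ v ∈ Finset.Ioo j i, 1 ≤ {u ∈ (↑(insert i D) : Set ℕ) | G.Adj v u}.ncard ∧
      {u ∈ (↑(insert i D) : Set ℕ) | G.Adj v u}.ncard ≤ 2) :
    Dom12 G i (insert i D) := by
  refine ⟨Finset.insert_subset (Finset.mem_Icc.2 ⟨by omega, le_rfl⟩)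
    (hD.1.trans (Finset.Icc_subset_Icc le_rfl hji.le)), fun v hv hvD => ?_⟩
  obtain ⟨hv1, hvi⟩ := Finset.mem_Icc.1 hv
  rcases le_or_gt v j with hvj | hjv
  · rw [sep_adj_insert_of_not_adj (not_adj_of_lt_low (by omega))]
    exact hD.2 v (Finset.mem_Icc.2 ⟨hv1, hvj⟩) fun h => hvD (Finset.mem_insert_of_mem h)
  · have hvi' : v ≠ i := fun h => hvD (h ▸ Finset.mem_insert_self i D)
    exact hnew v (Finset.mem_Ioo.2 ⟨hjv, by omega⟩)

end Dom12

lemma gval_eq_gval_add_one {i j : ℕ} (hji : j < i) {P Q : Finset ℕ → Prop}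
    (fwd : ∀ D, Dom12 G i D → P D → i ∈ D ∧ Dom12 G j (D.erase i) ∧ Q (D.erase i))
    (bwd : ∀ D, Dom12 G j D → Q D → Dom12 G i (insert i D) ∧ P (insert i D)) :
    gval G i P = gval G j Q + 1 := by
  have hcards : {m : ℕ∞ | ∃ D, Dom12 G i D ∧ P D ∧ (D.card : ℕ∞) = m} =
      (· + 1) '' {m : ℕ∞ | ∃ D, Dom12 G j D ∧ Q D ∧ (D.card : ℕ∞) = m} := by
    ext m
    constructor
    · rintro ⟨D, hD, hP, rfl⟩
      obtain ⟨hiD, hD', hQ⟩ := fwd D hD hP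
      exact ⟨_, ⟨_, hD', hQ, rfl⟩, by rw [← Finset.card_erase_add_one hiD]; push_cast; rfl⟩
    · rintro ⟨_, ⟨D, hD, hQ, rfl⟩, rfl⟩
      have hiD : i ∉ D := fun h => by have := (Finset.mem_Icc.1 (hD.1 h)).2; omega
      obtain ⟨hD', hP⟩ := bwd D hD hQ
      exact ⟨_, hD', hP, by rw [Finset.card_insert_of_notMem hiD]; push_cast; rfl⟩
  rw [gval, gval, hcards, sInf_image, ENat.sInf_add]

lemma g1I_self (j : ℕ) : g1I G j j = g1 G j := by
  simp [g1I, g1]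

section Recurrence

variable {i j k d : ℕ}

lemma notMem_Ico_of_common_neighbor (hG : ∀ a b c : ℕ, a < b → b < c → G.Adj a c → G.Adj b c)
    {D : Finset ℕ} (hD : Dom12 G i D) (hiD : i ∈ D) (hjD : j ∈ D)
    (hP : ∀ x ∈ Finset.Ico k i, x ≠ j → x ∉ D) (hkj : k ≤ j) {z : ℕ}
    (hz : z ∈ Finset.Ico (low G i) i) (hzd : low G z ≤ d) (hlow : j < low G i) :
    ∀ x ∈ Finset.Ico d k, x ∉ D := by
  intro x hx hxD
  obtain ⟨hdx, hxk⟩ := Finset.mem_Ico.1 hx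
  obtain ⟨hbz, hzi⟩ := Finset.mem_Ico.1 hz
  have hzD : z ∉ D := hP z (Finset.mem_Ico.2 ⟨by omega, hzi⟩) (by omega)
  refine hzD (hD.mem_of_three_adj (Finset.mem_Icc.2 ⟨by omega, hzi.le⟩)
    (by omega) (by omega) (by omega) hxD hjD hiD ?_ ?_ ?_)
  · exact (adj_iff_low_le hG (by omega)).2 (by omega)
  · exact (adj_iff_low_le hG (by omega)).2 (by omega)
  · exact ((adj_iff_low_le hG hzi).2 hbz).symm

lemma sep_adj_insert_subset_pair {D : Finset ℕ} (hD : Dom12 G j D)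
    (hQ : ∀ x ∈ Finset.Ico k j, x ∉ D) {v : ℕ} (hkv : k ≤ low G v) :
    {u ∈ (↑(insert i D) : Set ℕ) | G.Adj v u} ⊆ {i, j} := by
  rintro u ⟨hu, hvu⟩
  rcases Finset.mem_insert.1 hu with rfl | huD
  · exact Or.inl rfl
  · have huj := (Finset.mem_Icc.1 (hD.1 huD)).2
    have hlu := low_le_of_adj hvu
    by_contra hne
    simp only [Set.mem_insert_iff, Set.mem_singleton_iff, not_or] at hne
    exact hQ u (Finset.mem_Ico.2 ⟨by omega, by omega⟩) huD

theorem g1Ij_eq_g1I_min_add_one (hG : ∀ a b c : ℕ, a < b → b < c → G.Adj a c → G.Adj b c)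
    (hji : j < i) (hkj : k ≤ j) (hlow : j < low G i)
    (hd : ∀ v ∈ Finset.Ioo j i, d ≤ low G v)
    (hcover : ∀ v ∈ Finset.Ioo j (low G i), low G v ≤ j)
    (hz : ∃ z ∈ Finset.Ico (low G i) i, low G z ≤ d) :
    g1Ij G k i j = g1I G (min k d) j + 1 := by
  obtain ⟨z, hz, hzd⟩ := hz
  refine gval_eq_gval_add_one hji ?_ ?_
  · rintro D hD ⟨hiD, hjD, hP⟩
    have hDj : ∀ x ∈ D, x ≠ i → x ≤ j := fun x hx hxi => by
      by_contra hjx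
      exact hP x (Finset.mem_Ico.2 ⟨by omega, by have := (Finset.mem_Icc.1 (hD.1 hx)).2; omega⟩)
        (by omega) hx
    refine ⟨hiD, hD.erase_of_lt_low hji hlow hDj, Finset.mem_erase.2 ⟨hji.ne, hjD⟩, ?_⟩
    intro x hx hxD
    obtain ⟨hx1, hxj⟩ := Finset.mem_Ico.1 hx
    have hxD := (Finset.mem_erase.1 hxD).2
    rcases le_or_gt k x with hkx | hxk
    · exact hP x (Finset.mem_Ico.2 ⟨hkx, by omega⟩) (by omega) hxD
    · exact notMem_Ico_of_common_neighbor hG hD hiD hjD hP hkj hz hzd hlow x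
        (Finset.mem_Ico.2 ⟨by omega, hxk⟩) hxD
  · rintro D hD ⟨hjD, hQ⟩
    refine ⟨hD.insert_of_lt_low hji hlow fun v hv => ?_, Finset.mem_insert_self i D,
      Finset.mem_insert_of_mem hjD, fun x hx hxj hxD => ?_⟩
    · obtain ⟨hjv, hvi⟩ := Finset.mem_Ioo.1 hv
      refine one_le_ncard_and_ncard_le_two
        (sep_adj_insert_subset_pair hD hQ ((min_le_right k d).trans (hd v hv))) ?_
      rcases lt_or_ge v (low G i) with hvb | hbv
      · exact ⟨j, Finset.mem_insert_of_mem hjD,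
          (adj_iff_low_le hG hjv).2 (hcover v (Finset.mem_Ioo.2 ⟨hjv, hvb⟩))⟩
      · exact ⟨i, Finset.mem_insert_self i D, ((adj_iff_low_le hG hvi).2 hbv).symm⟩
    · obtain ⟨hkx, hxi⟩ := Finset.mem_Ico.1 hx
      rcases Finset.mem_insert.1 hxD with rfl | hxD
      · omega
      · have := (Finset.mem_Icc.1 (hD.1 hxD)).2
        exact hQ x (Finset.mem_Ico.2 ⟨by omega, by omega⟩) hxD

end Recurrence

theorem g1Ij_recurrence_case_iii_general (G : SimpleGraph ℕ) (n : ℕ)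
    (hG : GoodNumbering G n) (i j k b d z : ℕ)
    (hj : j ∈ Finset.Ico 1 i) (hk : k ∈ Finset.Icc 1 j)
    (hbdef : b = low G i)
    (hddef : d = lowI G (j + 1) (i - 1))
    (hzdef : z = sSup {x : ℕ | x ∈ Set.Ioo j i ∧ low G x = d})
    (hnc1 : ¬ (j < b ∧ ∃ x ∈ Finset.Ioo j b, j < low G x))
    (hjb : j < b) (hz : b ≤ z) :
    ((k = j ∧ j ≤ d) → g1Ij G k i j = g1 G j + 1) ∧
    ((k < j ∧ k ≤ d) → g1Ij G k i j = g1I G k j + 1) ∧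
    (d < k → g1Ij G k i j = g1I G d j + 1) := by
  obtain ⟨-, hji⟩ := Finset.mem_Ico.1 hj
  obtain ⟨-, hkj⟩ := Finset.mem_Icc.1 hk
  subst hbdef hzdef
  have hd : ∀ v ∈ Finset.Ioo j i, d ≤ low G v := fun v hv => by
    rw [hddef]
    exact lowI_le_low (by simp only [Finset.mem_Ioo] at hv; exact ⟨by omega, by omega⟩)
  have hcover : ∀ v ∈ Finset.Ioo j (low G i), low G v ≤ j := fun v hv => by
    by_contra h
    exact hnc1 ⟨hjb, v, hv, by omega⟩
  obtain ⟨⟨-, hzi⟩, hzd⟩ := Nat.sSup_mem_of_pos (s := {x | x ∈ Set.Ioo j i ∧ low G x = d})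
    ⟨i, fun x hx => hx.1.2.le⟩ (by omega)
  have key := g1Ij_eq_g1I_min_add_one hG.2 hji hkj hjb hd hcover
    ⟨_, Finset.mem_Ico.2 ⟨hz, hzi⟩, hzd.le⟩
  refine ⟨fun ⟨hkeq, hjd⟩ => ?_, fun ⟨_, hkd⟩ => ?_, fun hdk => ?_⟩ <;> rw [key]
  · rw [hkeq, min_eq_left hjd, g1I_self]
  · rw [min_eq_left hkd]
  · rw [min_eq_right hdk.le]

/-- Lemma (iii): case `j < b` and `z ≥ b`, where `b = low(i)`, `c = low(j)`,
`d = low(j+1, i-1)` and `z = max {x ∈ (j,i) : low(x) = d}`. -/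
theorem g1Ij_recurrence_case_iii (G : SimpleGraph ℕ) (n : ℕ) (hn : 1 ≤ n)
    (hG : GoodNumbering G n) (i j k b c d z : ℕ) (hi : i ∈ Finset.Icc 1 n)
    (hj : j ∈ Finset.Ico 1 i) (hk : k ∈ Finset.Icc 1 j)
    (hbdef : b = low G i) (hcdef : c = low G j)
    (hddef : d = lowI G (j + 1) (i - 1))
    (hzdef : z = sSup {x : ℕ | x ∈ Set.Ioo j i ∧ low G x = d})
    (hnc1 : ¬ (j < b ∧ ∃ x ∈ Finset.Ioo j b, j < low G x))
    (hnc2 : ¬ (k < min b c ∧ ∃ x ∈ Finset.Ico k (min b c), k ≤ low G x))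
    (hjb : j < b) (hz : b ≤ z) :
    ((k = j ∧ j ≤ d) → g1Ij G k i j = g1 G j + 1) ∧
    ((k < j ∧ k ≤ d) → g1Ij G k i j = g1I G k j + 1) ∧
    (d < k → g1Ij G k i j = g1I G d j + 1) :=
  g1Ij_recurrence_case_iii_general G n hG i j k b d z hj hk hbdef hddef hzdef hnc1 hjb hz
end
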